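/- The map ĉode : Sₙ → C_{n−1} is a bijection, where C_{n−1} is the set of (n−1)-tuples of non-negative integers (a₁,...,a_{n−1}) with aᵢ ≤ n−i. -/
import Mathlib


open Finset
open scoped Classical

/-- entry of a permutation of `Fin n` at 0-indexed position `i` (0-based values). -/
def ent {n : ℕ} (σ : Equiv.Perm (Fin n)) (i : ℕ) : ℕ :=
  if h : i < n then (σ ⟨i, h⟩ : ℕ) else 0

/-- the triple `(a, b, c)` of distinct values, reduced to a permutation in `S₃`, is odd. -/
def odd3 (a b c : ℕ) : Prop :=
  ((if b < a then 1 else 0) + (if c < a then 1 else 0) + (if c < b then 1 else 0)) % 2 = 1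

instance (a b c : ℕ) : Decidable (odd3 a b c) := by
  unfold odd3; infer_instance

/-- 3-descent set, 0-indexed positions (position `i` here is paper position `i+1`). -/
def D3 {n : ℕ} (σ : Equiv.Perm (Fin n)) : Finset ℕ :=
  (Finset.range (n - 2)).filter (fun i => odd3 (ent σ i) (ent σ (i + 1)) (ent σ (i + 2)))

/-- alternating descent set, 0-indexed positions. -/
def altD {n : ℕ} (σ : Equiv.Perm (Fin n)) : Finset ℕ :=
  (Finset.range (n - 1)).filter (fun i =>
    (Even i ∧ ent σ (i + 1) < ent σ i) ∨ (¬ Even i ∧ ent σ i < ent σ (i + 1)))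

/-- number of up-down alternating permutations of `[n]` (the Euler number `Eₙ`). -/
noncomputable def EulerNum (n : ℕ) : ℕ :=
  ((Finset.univ : Finset (Equiv.Perm (Fin n))).filter (fun τ =>
    ∀ i ∈ Finset.range (n - 1),
      (Even i ∧ ent τ i < ent τ (i + 1)) ∨ (¬ Even i ∧ ent τ (i + 1) < ent τ i))).card

/-- `c³ᵢ(σ)`, 0-indexed: number of `j > i+1` with `σᵢ σᵢ₊₁ σⱼ` odd. -/
def c3 {n : ℕ} (σ : Equiv.Perm (Fin n)) (i : ℕ) : ℕ :=
  ((Finset.range n).filter (fun j => i + 1 < j ∧ odd3 (ent σ i) (ent σ (i + 1)) (ent σ j))).card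

/-- `ĉᵢ(σ)`, 0-indexed. -/
def chat {n : ℕ} (σ : Equiv.Perm (Fin n)) (i : ℕ) : ℕ :=
  ((Finset.range n).filter (fun j => i < j ∧
    ((Even i ∧ ent σ j < ent σ i) ∨ (¬ Even i ∧ ent σ i < ent σ j)))).card

/-- `i₃` of an arbitrary word `f 0, f 1, ..., f (m-1)`. -/
def i3f (m : ℕ) (f : ℕ → ℕ) : ℕ :=
  ((Finset.range m ×ˢ Finset.range m).filter (fun p =>
    p.1 + 1 < p.2 ∧ odd3 (f p.1) (f (p.1 + 1)) (f p.2))).card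

/-- the 3-inversion statistic `i₃`. -/
def i3 {n : ℕ} (σ : Equiv.Perm (Fin n)) : ℕ := i3f n (ent σ)

/-- the word `1*σ` (0-based values): `0, σ₀+1, σ₁+1, ...`. -/
def oneStar {n : ℕ} (σ : Equiv.Perm (Fin n)) : ℕ → ℕ :=
  fun i => if i = 0 then 0 else ent σ (i - 1) + 1

/-- number of alternating inversions `î(σ)`. -/
def altInv {n : ℕ} (σ : Equiv.Perm (Fin n)) : ℕ :=
  ((Finset.range n ×ˢ Finset.range n).filter (fun p => p.1 < p.2 ∧
    ((Even p.1 ∧ ent σ p.2 < ent σ p.1) ∨ (¬ Even p.1 ∧ ent σ p.1 < ent σ p.2)))).card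

/-- number of inversions of the word `f 0, ..., f (m-1)`. -/
def invf (m : ℕ) (f : ℕ → ℕ) : ℕ :=
  ((Finset.range m ×ˢ Finset.range m).filter (fun p => p.1 < p.2 ∧ f p.2 < f p.1)).card

/-- major index of the word `f 0, ..., f (m-1)` (descent at 0-indexed `i` contributes `i+1`). -/
def majf (m : ℕ) (f : ℕ → ℕ) : ℕ :=
  ∑ i ∈ (Finset.range (m - 1)).filter (fun i => f (i + 1) < f i), (i + 1)

/-- `Â(m, r)`: number of permutations of `[m]` with `r - 1` alternating descents. -/
def Ahat (m r : ℕ) : ℕ :=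
  ((Finset.univ : Finset (Equiv.Perm (Fin m))).filter (fun σ => (altD σ).card + 1 = r)).card

/-- down-up alternating: `σ₁ > σ₂ < σ₃ > ⋯`. -/
def DownUp {n : ℕ} (σ : Equiv.Perm (Fin n)) : Prop :=
  ∀ i ∈ Finset.range (n - 1),
    (Even i ∧ ent σ (i + 1) < ent σ i) ∨ (¬ Even i ∧ ent σ i < ent σ (i + 1))

instance {n : ℕ} (σ : Equiv.Perm (Fin n)) : Decidable (DownUp σ) := by
  unfold DownUp; infer_instance

/-- up-down alternating: `σ₁ < σ₂ > σ₃ < ⋯`. -/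
def UpDown {n : ℕ} (σ : Equiv.Perm (Fin n)) : Prop :=
  ∀ i ∈ Finset.range (n - 1),
    (Even i ∧ ent σ i < ent σ (i + 1)) ∨ (¬ Even i ∧ ent σ (i + 1) < ent σ i)

lemma ent_eq {n : ℕ} (σ : Equiv.Perm (Fin n)) (j : ℕ) (h : j < n) :
    ent σ j = (σ ⟨j, h⟩ : ℕ) := by simp [ent, h]

lemma ent_fin {n : ℕ} (σ : Equiv.Perm (Fin n)) (j : Fin n) :
    ent σ j.val = (σ j : ℕ) := by rw [ent_eq σ j.val j.isLt]

lemma chat_le {n : ℕ} (σ : Equiv.Perm (Fin n)) (i : ℕ) : chat σ i ≤ n - 1 - i := by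
  unfold chat
  calc _ ≤ (Finset.Ico (i+1) n).card := by
        apply Finset.card_le_card
        intro j hj
        simp only [Finset.mem_filter, Finset.mem_range, Finset.mem_Ico] at *
        omega
    _ = n - (i+1) := Nat.card_Ico _ _
    _ = n - 1 - i := by omega

lemma chat_rank {n : ℕ} (σ : Equiv.Perm (Fin n)) (i : Fin n) :
    chat σ i.val = ((univ.filter fun v : Fin n => i ≤ σ.symm v).filter
      fun v => (Even i.val ∧ v < σ i) ∨ (¬ Even i.val ∧ σ i < v)).card := by
  unfold chat
  refine Finset.card_bij' (fun j hj => σ ⟨j, by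
      simp only [Finset.mem_filter, Finset.mem_range] at hj; exact hj.1⟩)
    (fun v _ => (σ.symm v : ℕ)) ?_ ?_ ?_ ?_
  · intro j hj
    simp only [Finset.mem_filter, Finset.mem_range] at hj
    obtain ⟨h1, h2, h3⟩ := hj
    simp only [Finset.mem_filter, Finset.mem_univ, true_and, Equiv.symm_apply_apply]
    refine ⟨Fin.le_def.mpr (le_of_lt h2), ?_⟩
    rw [ent_eq σ j h1, ent_fin σ i] at h3
    rcases h3 with ⟨he, hlt⟩ | ⟨he, hlt⟩
    · exact Or.inl ⟨he, Fin.lt_def.mpr hlt⟩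
    · exact Or.inr ⟨he, Fin.lt_def.mpr hlt⟩
  · intro v hv
    simp only [Finset.mem_filter, Finset.mem_univ, true_and] at hv
    obtain ⟨h1, h2⟩ := hv
    have hvne : v ≠ σ i := by
      rcases h2 with ⟨_, hlt⟩ | ⟨_, hlt⟩ <;> exact fun h => by simp [h] at hlt
    have hne : σ.symm v ≠ i := fun h => hvne (by rw [← h, Equiv.apply_symm_apply])
    have hlt : i < σ.symm v := lt_of_le_of_ne h1 (Ne.symm hne)
    simp only [Finset.mem_filter, Finset.mem_range]
    refine ⟨(σ.symm v).isLt, Fin.lt_def.mp hlt, ?_⟩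
    rw [ent_fin σ (σ.symm v), ent_fin σ i, Equiv.apply_symm_apply]
    rcases h2 with ⟨he, hlt2⟩ | ⟨he, hlt2⟩
    · exact Or.inl ⟨he, Fin.lt_def.mp hlt2⟩
    · exact Or.inr ⟨he, Fin.lt_def.mp hlt2⟩
  · intro j hj
    simp
  · intro v hv
    simp

lemma rank_lt_inj {α : Type*} [LinearOrder α] (S : Finset α) {v w : α}
    (hv : v ∈ S) (hw : w ∈ S)
    (h : (S.filter (· < v)).card = (S.filter (· < w)).card) : v = w := by
  have mono : ∀ a b : α, a ∈ S → a < b →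
      (S.filter (· < a)).card < (S.filter (· < b)).card := by
    intro a b ha hab
    apply Finset.card_lt_card
    have hsub : S.filter (· < a) ⊆ S.filter (· < b) := by
      intro x hx
      simp only [Finset.mem_filter] at *
      exact ⟨hx.1, lt_trans hx.2 hab⟩
    rw [Finset.ssubset_iff_of_subset hsub]
    exact ⟨a, Finset.mem_filter.mpr ⟨ha, hab⟩,
      fun hc => absurd (Finset.mem_filter.mp hc).2 (lt_irrefl a)⟩
  by_contra hne
  rcases lt_or_gt_of_ne hne with h1 | h1
  · exact absurd h (mono v w hv h1).ne
  · exact absurd h.symm (mono w v hw h1).ne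

lemma rank_gt_inj {α : Type*} [LinearOrder α] (S : Finset α) {v w : α}
    (hv : v ∈ S) (hw : w ∈ S)
    (h : (S.filter (v < ·)).card = (S.filter (w < ·)).card) : v = w := by
  have mono : ∀ a b : α, a ∈ S → b < a →
      (S.filter (a < ·)).card < (S.filter (b < ·)).card := by
    intro a b ha hab
    apply Finset.card_lt_card
    have hsub : S.filter (a < ·) ⊆ S.filter (b < ·) := by
      intro x hx
      simp only [Finset.mem_filter] at *
      exact ⟨hx.1, lt_trans hab hx.2⟩
    rw [Finset.ssubset_iff_of_subset hsub]
    exact ⟨a, Finset.mem_filter.mpr ⟨ha, hab⟩,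
      fun hc => absurd (Finset.mem_filter.mp hc).2 (lt_irrefl a)⟩
  by_contra hne
  rcases lt_or_gt_of_ne hne with h1 | h1
  · exact absurd h.symm (mono w v hw h1).ne
  · exact absurd h (mono v w hv h1).ne

lemma S_eq {n : ℕ} (σ τ : Equiv.Perm (Fin n)) (i : Fin n)
    (hagree : ∀ j : Fin n, j < i → σ j = τ j) :
    (univ.filter fun v : Fin n => i ≤ σ.symm v)
      = (univ.filter fun v : Fin n => i ≤ τ.symm v) := by
  have key : ∀ (σ τ : Equiv.Perm (Fin n)), (∀ j : Fin n, j < i → σ j = τ j) →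
      ∀ v : Fin n, σ.symm v < i → τ.symm v < i := by
    intro σ τ hag v hlt
    have h1 : τ (σ.symm v) = v := by rw [← hag _ hlt, Equiv.apply_symm_apply]
    have h2 : τ.symm v = σ.symm v := by
      apply τ.injective
      rw [Equiv.apply_symm_apply, h1]
    rw [h2]; exact hlt
  ext v
  simp only [Finset.mem_filter, Finset.mem_univ, true_and]
  constructor
  · intro h
    by_contra hc
    exact absurd (key τ σ (fun j hj => (hagree j hj).symm) v (lt_of_not_ge hc)) (not_lt.mpr h)
  · intro h
    by_contra hc
    exact absurd (key σ τ hagree v (lt_of_not_ge hc)) (not_lt.mpr h)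

lemma code_inj {n : ℕ} (σ τ : Equiv.Perm (Fin n))
    (h : ∀ i : Fin (n - 1), chat σ (i : ℕ) = chat τ (i : ℕ)) : σ = τ := by
  have key : ∀ m : ℕ, ∀ hm : m < n, σ ⟨m, hm⟩ = τ ⟨m, hm⟩ := by
    intro m
    induction m using Nat.strong_induction_on with
    | _ m IH =>
    intro hm
    set i : Fin n := ⟨m, hm⟩ with hi
    have hagree : ∀ j : Fin n, j < i → σ j = τ j := by
      intro j hj
      have := IH j.val (Fin.lt_def.mp hj) j.isLt
      simpa using this
    by_cases hcase : m < n - 1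
    · have hc := h ⟨m, hcase⟩
      have hσr := chat_rank σ i
      have hτr := chat_rank τ i
      have hS := S_eq σ τ i hagree
      set S := (univ.filter fun v : Fin n => i ≤ σ.symm v) with hSdef
      have hσS : σ i ∈ S := by
        simp [hSdef, Finset.mem_filter]
      have hτS : τ i ∈ S := by
        rw [hS]; simp [Finset.mem_filter]
      have hval : ((⟨m, hcase⟩ : Fin (n - 1)) : ℕ) = i.val := rfl
      rw [hval, hσr, hτr, ← hS] at hc
      by_cases he : Even i.val
      · have e1 : (S.filter fun v => (Even i.val ∧ v < σ i) ∨ (¬ Even i.val ∧ σ i < v))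
            = S.filter (· < σ i) := Finset.filter_congr (fun v _ => by simp [he])
        have e2 : (S.filter fun v => (Even i.val ∧ v < τ i) ∨ (¬ Even i.val ∧ τ i < v))
            = S.filter (· < τ i) := Finset.filter_congr (fun v _ => by simp [he])
        rw [e1, e2] at hc
        exact rank_lt_inj S hσS hτS hc
      · have e1 : (S.filter fun v => (Even i.val ∧ v < σ i) ∨ (¬ Even i.val ∧ σ i < v))
            = S.filter (σ i < ·) := Finset.filter_congr (fun v _ => by simp [he])
        have e2 : (S.filter fun v => (Even i.val ∧ v < τ i) ∨ (¬ Even i.val ∧ τ i < v))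
            = S.filter (τ i < ·) := Finset.filter_congr (fun v _ => by simp [he])
        rw [e1, e2] at hc
        exact rank_gt_inj S hσS hτS hc
    · by_contra hne2
      set j := τ.symm (σ i) with hj
      have hτj : τ j = σ i := Equiv.apply_symm_apply τ (σ i)
      have hjne : j ≠ i := by
        intro hji
        rw [hji] at hτj
        exact hne2 hτj.symm
      have hjlt : j < i := by
        rw [Fin.lt_def]
        have h1 : j.val < n := j.isLt
        have h2 : j.val ≠ m := fun hv => hjne (Fin.ext hv)
        have h3 : i.val = m := rfl
        omega
      have := hagree j hjlt
      rw [hτj] at this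
      exact absurd (σ.injective this) hjne
  exact Equiv.ext fun x => by have := key x.val x.isLt; simpa using this

lemma prod_desc (m : ℕ) : ∏ i ∈ Finset.range m, (m + 1 - i) = (m + 1).factorial := by
  induction m with
  | zero => simp
  | succ k ih =>
    rw [Finset.prod_range_succ']
    have : ∀ i ∈ Finset.range k, (k + 1 + 1 - (i + 1)) = (k + 1 - i) := by
      intro i _; omega
    rw [Finset.prod_congr rfl this, ih]
    have : k + 1 + 1 - 0 = k + 2 := by omega
    rw [this, Nat.factorial_succ (k+1)]
    ring

lemma prod_fact (n : ℕ) : ∏ i ∈ Finset.range (n - 1), (n - i) = n.factorial := by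
  cases n with
  | zero => simp
  | succ m =>
    have : m + 1 - 1 = m := by omega
    rw [this]
    exact prod_desc m

theorem stmt7 (n : ℕ) :
    Set.BijOn (fun σ : Equiv.Perm (Fin n) => fun i : Fin (n - 1) => chat σ (i : ℕ))
      Set.univ
      {a : Fin (n - 1) → ℕ | ∀ i, a i ≤ n - 1 - (i : ℕ)} := by
  set code := fun σ : Equiv.Perm (Fin n) => fun i : Fin (n - 1) => chat σ (i : ℕ) with hcode
  have hinj : Function.Injective code := by
    intro σ τ hfun
    exact code_inj σ τ (fun i => congrFun hfun i)
  refine ⟨?_, ?_, ?_⟩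
  · intro σ _
    intro i
    exact chat_le σ i
  · intro σ _ τ _ hfun
    exact hinj hfun
  · intro b hb
    set T : Finset (Fin (n - 1) → ℕ) :=
      Fintype.piFinset fun i : Fin (n - 1) => Finset.range (n - i.val) with hT
    have hbT : b ∈ T := by
      rw [hT, Fintype.mem_piFinset]
      intro i
      rw [Finset.mem_range]
      have h1 := hb i
      have h2 := i.isLt
      omega
    have himg : (univ : Finset (Equiv.Perm (Fin n))).image code ⊆ T := by
      intro c hc
      rw [Finset.mem_image] at hc
      obtain ⟨σ, _, rfl⟩ := hc
      rw [hT, Fintype.mem_piFinset]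
      intro i
      rw [Finset.mem_range]
      have h1 := chat_le σ (i : ℕ)
      have h2 := i.isLt
      show chat σ (i : ℕ) < n - i.val
      omega
    have hTcard : T.card = n.factorial := by
      rw [hT, Fintype.card_piFinset]
      simp only [Finset.card_range]
      rw [Fin.prod_univ_eq_prod_range (fun i => n - i) (n - 1)]
      exact prod_fact n
    have hicard : ((univ : Finset (Equiv.Perm (Fin n))).image code).card = n.factorial := by
      rw [Finset.card_image_of_injective _ hinj, Finset.card_univ, Fintype.card_perm,
        Fintype.card_fin]
    have heq : (univ : Finset (Equiv.Perm (Fin n))).image code = T :=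
      Finset.eq_of_subset_of_card_le himg (by rw [hicard, hTcard])
    rw [← heq, Finset.mem_image] at hbT
    obtain ⟨σ, _, hσ⟩ := hbT
    exact ⟨σ, Set.mem_univ σ, hσ⟩
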